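/- Let $m \geq 2$ and let $a \in \mathbb{R}_{\geq 0}^m$ with $a_1 \geq a_2 \geq \cdots \geq a_m \geq 0$ and $a_1 + a_2 \leq 2$. If $\prod_{i=1}^m (1 + a_i) \leq 3\left(2 - \frac{1}{m-1}\right)$, then $\sum_{i=1}^m a_i \leq 3 - \frac{1}{m-1}$. -/

import Mathlib

/-!
Split off the largest coordinate `x = a₀` and let `T` be the sum of the others, which are all
at most `y = a₁`. Keeping the terms of degree at most two of the tail product gives
`∏ (1 + aᵢ) ≥ (1 + x) (1 + T + T (T - y) / 2)`, and under `y ≤ x`, `x + y ≤ 2`, `y ≤ T` the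
right-hand side is at least `3 (x + T - 1)`. So the product bound `3 (2 - 1/(m-1))` forces
`x + T ≤ 3 - 1/(m-1)`.
-/

open Finset

lemma one_add_sum_add_half_sq_sub_sum_sq_le_prod_one_add {ι : Type*} (s : Finset ι) (f : ι → ℝ)
    (hf : ∀ i ∈ s, 0 ≤ f i) :
    1 + ∑ i ∈ s, f i + ((∑ i ∈ s, f i) ^ 2 - ∑ i ∈ s, f i ^ 2) / 2 ≤ ∏ i ∈ s, (1 + f i) := by
  induction s using Finset.cons_induction with
  | empty => simp
  | cons b s _ ih =>
    have hf_s : ∀ i ∈ s, 0 ≤ f i := fun i hi => hf i (mem_cons_of_mem hi)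
    have hfb : 0 ≤ f b := hf b (mem_cons_self b s)
    have hsum : 0 ≤ ∑ i ∈ s, f i := sum_nonneg hf_s
    have hsq : ∑ i ∈ s, f i ^ 2 ≤ (∑ i ∈ s, f i) ^ 2 := sum_sq_le_sq_sum_of_nonneg hf_s
    have hstep := mul_le_mul_of_nonneg_left (ih hf_s) (by linarith : 0 ≤ 1 + f b)
    rw [prod_cons, sum_cons, sum_cons]
    nlinarith

lemma one_add_sum_add_half_sum_mul_sub_le_prod_one_add {ι : Type*} (s : Finset ι) (f : ι → ℝ)
    {c : ℝ} (hf : ∀ i ∈ s, 0 ≤ f i) (hfc : ∀ i ∈ s, f i ≤ c) :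
    1 + ∑ i ∈ s, f i + (∑ i ∈ s, f i) * (∑ i ∈ s, f i - c) / 2 ≤ ∏ i ∈ s, (1 + f i) := by
  have hsq : ∑ i ∈ s, f i ^ 2 ≤ c * ∑ i ∈ s, f i := by
    rw [mul_sum]
    exact sum_le_sum fun i hi => by nlinarith [hf i hi, hfc i hi]
  have := one_add_sum_add_half_sq_sub_sum_sq_le_prod_one_add s f hf
  nlinarith

-- The difference of the two sides is `(2 - x) (2 - T) + (1 + x) T (T - y) / 2`.
lemma three_mul_add_sub_one_le {x y T : ℝ} (hy : 0 ≤ y) (hyx : y ≤ x) (hxy : x + y ≤ 2)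
    (hyT : y ≤ T) : 3 * (x + T - 1) ≤ (1 + x) * (1 + T + T * (T - y) / 2) := by
  nlinarith [mul_nonneg (sub_nonneg.2 hyT) (sub_nonneg.2 hyx), mul_nonneg hy (sub_nonneg.2 hyT),
    mul_nonneg (sub_nonneg.2 hyT) (sub_nonneg.2 hyT), sq_nonneg (T - 2),
    mul_nonneg (sub_nonneg.2 hxy) (sub_nonneg.2 hyT)]

theorem Vm_subset_Cm {m : ℕ} (hm : 2 ≤ m) (a : Fin m → ℝ)
    (h0 : ∀ i, 0 ≤ a i) (hsort : Antitone a)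
    (h12 : a ⟨0, by omega⟩ + a ⟨1, by omega⟩ ≤ 2)
    (hprod : ∏ i, (1 + a i) ≤ 3 * (2 - 1 / ((m : ℝ) - 1))) :
    ∑ i, a i ≤ 3 - 1 / ((m : ℝ) - 1) := by
  set i₀ : Fin m := ⟨0, by omega⟩
  set i₁ : Fin m := ⟨1, by omega⟩
  set tail := univ.erase i₀
  have hi₁ : i₁ ∈ tail := mem_erase.2 ⟨by simp [i₀, i₁, Fin.ext_iff], mem_univ _⟩
  have htail_le : ∀ i ∈ tail, a i ≤ a i₁ := fun i hi =>
    hsort (Fin.le_def.2 (Nat.one_le_iff_ne_zero.2 fun h => (mem_erase.1 hi).1 (Fin.ext h)))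
  have hbound := one_add_sum_add_half_sum_mul_sub_le_prod_one_add tail a (fun i _ => h0 i) htail_le
  have hkey := three_mul_add_sub_one_le (h0 i₁) (hsort (show i₀ ≤ i₁ by simp [i₀, i₁, Fin.le_def]))
    h12 (single_le_sum (fun i _ => h0 i) hi₁)
  have hprod_split : (1 + a i₀) * ∏ i ∈ tail, (1 + a i) = ∏ i, (1 + a i) :=
    mul_prod_erase _ (fun i => 1 + a i) (mem_univ i₀)
  have hsum_split : a i₀ + ∑ i ∈ tail, a i = ∑ i, a i := add_sum_erase _ _ (mem_univ i₀)
  have := mul_le_mul_of_nonneg_left hbound (by linarith [h0 i₀] : 0 ≤ 1 + a i₀)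
  linarith
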